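/- arXiv:1401.1966 — 6 statements merged into one kernel-verified Lean document; each statement's English description precedes it below -/
import Mathlib

section
/- Let ρ ∈ (1/2, 1) and let z₁, z₂ be positive natural numbers with z₁ + z₂ odd and |z₁ - z₂| ≥ 2. Then ℓ_ρ(z₁) + ℓ_ρ(z₂) > ℓ_ρ(⌊(z₁+z₂)/2⌋) + ℓ_ρ(⌊(z₁+z₂)/2⌋ + 1). -/
/-!
With `a = 1 - ρ ≠ 0`, `ℓ_ρ(x) = ‖(a, x - (1 - ρ))‖` is the Euclidean norm along a line missing the
origin, hence strictly convex in `x`. An odd sum with gap at least 2 forces `z₁ < m < m + 1 < z₂`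
(or the symmetric order) for `m = ⌊(z₁ + z₂)/2⌋`, and the pairs `{z₁, z₂}`, `{m, m + 1}` have the
same sum, so strict monotonicity of the slopes of `ℓ_ρ` gives the inequality.
-/

noncomputable def ell (ρ x : ℝ) : ℝ := Real.sqrt ((1 - ρ)^2 + (x - (1 - ρ))^2)

open Set

theorem strictConvexOn_norm_add_smul {E : Type*} [NormedAddCommGroup E] [NormedSpace ℝ E]
    [StrictConvexSpace ℝ E] {v w : E} (hvw : LinearIndependent ℝ ![v, w]) :
    StrictConvexOn ℝ univ fun x : ℝ => ‖v + x • w‖ := by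
  rw [LinearIndependent.pair_iff] at hvw
  have hne : ∀ x : ℝ, v + x • w ≠ 0 := fun x h => by
    simpa using (hvw 1 x (by simpa using h)).1
  refine LinearOrder.strictConvexOn_of_lt convex_univ fun x _ y _ hxy a b ha hb hab => ?_
  have hray : ¬SameRay ℝ (a • (v + x • w)) (b • (v + y • w)) := by
    intro h
    obtain ⟨r, s, hr, hs, heq⟩ :=
      h.exists_pos (smul_ne_zero ha.ne' (hne x)) (smul_ne_zero hb.ne' (hne y))
    obtain ⟨hv, hw⟩ := hvw (r * a - s * b) (r * a * x - s * b * y) (by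
      rw [← sub_eq_zero] at heq
      linear_combination (norm := module) heq)
    have : r * a * (x - y) = 0 := by linear_combination hw - y * hv
    have : x - y = 0 := by simpa [hr.ne', ha.ne'] using this
    linarith
  calc ‖v + (a • x + b • y) • w‖ = ‖a • (v + x • w) + b • (v + y • w)‖ := by
        congr 1
        linear_combination (norm := module) -hab • v
    _ < ‖a • (v + x • w)‖ + ‖b • (v + y • w)‖ := norm_add_lt_of_not_sameRay hray
    _ = a • ‖v + x • w‖ + b • ‖v + y • w‖ := by
        rw [norm_smul, norm_smul, Real.norm_of_nonneg ha.le, Real.norm_of_nonneg hb.le]; rfl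

theorem strictConvexOn_sqrt_sq_add_sq {a : ℝ} (ha : a ≠ 0) :
    StrictConvexOn ℝ univ fun x : ℝ => √(a ^ 2 + x ^ 2) := by
  have hindep : LinearIndependent ℝ ![(a : ℂ), Complex.I] := by
    refine LinearIndependent.pair_iff.2 fun s t hst => ?_
    exact ⟨by simpa [ha] using congrArg Complex.re hst, by simpa using congrArg Complex.im hst⟩
  convert strictConvexOn_norm_add_smul hindep using 2 with x
  rw [Complex.real_smul, Complex.norm_add_mul_I]

theorem strictConvexOn_ell {ρ : ℝ} (hρ : ρ ≠ 1) : StrictConvexOn ℝ univ (ell ρ) := by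
  have hcomp : ell ρ = (fun x => √((1 - ρ) ^ 2 + x ^ 2)) ∘ fun z => z + -(1 - ρ) := by
    funext x
    simp only [ell, Function.comp_apply, sub_eq_add_neg]
  rw [hcomp, ← preimage_univ (f := fun z => -(1 - ρ) + z)]
  exact (strictConvexOn_sqrt_sq_add_sq (sub_ne_zero.2 hρ.symm)).translate_left _

theorem StrictConvexOn.map_add_map_lt_of_add_eq {𝕜 : Type*} [Field 𝕜] [LinearOrder 𝕜]
    [IsStrictOrderedRing 𝕜] {s : Set 𝕜} {f : 𝕜 → 𝕜} (hf : StrictConvexOn 𝕜 s f)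
    {p q r t : 𝕜} (hp : p ∈ s) (ht : t ∈ s) (hpq : p < q) (hqr : q < r) (hrt : r < t)
    (hsum : p + t = q + r) : f q + f r < f p + f t := by
  have hq : q ∈ s := hf.1.ordConnected.out hp ht ⟨hpq.le, (hqr.trans hrt).le⟩
  have hr : r ∈ s := hf.1.ordConnected.out hp ht ⟨(hpq.trans hqr).le, hrt.le⟩
  have hslope := (hf.slope_strict_mono_adjacent hp hr hpq hqr).trans
    (hf.slope_strict_mono_adjacent hq ht hqr hrt)
  have hgap : t - r = q - p := by linarith
  rw [hgap, div_lt_div_iff_of_pos_right (sub_pos.2 hpq)] at hslope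
  linarith

theorem ell_add_ell_lt_of_lt {ρ : ℝ} (hρ : ρ ≠ 1) {u v m : ℕ} (hum : u < m)
    (hsum : u + v = 2 * m + 1) : ell ρ m + ell ρ (m + 1) < ell ρ u + ell ρ v := by
  have hum' : (u : ℝ) < m := by exact_mod_cast hum
  have hmv : (m : ℝ) + 1 < v := by exact_mod_cast (by omega : m + 1 < v)
  have hsum' : (u : ℝ) + v = m + (m + 1) := by
    rw [← add_assoc, ← two_mul]; exact_mod_cast hsum
  exact (strictConvexOn_ell hρ).map_add_map_lt_of_add_eq (mem_univ _) (mem_univ _) hum'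
    (lt_add_one _) hmv hsum'

theorem ell_odd_split_general (ρ : ℝ) (hρ : ρ ∈ Set.Ioo (1/2 : ℝ) 1)
    (z₁ z₂ : ℕ)
    (hodd : Odd (z₁ + z₂)) (hgap : 2 ≤ |(z₁ : ℤ) - (z₂ : ℤ)|) :
    ell ρ z₁ + ell ρ z₂ >
      ell ρ (((z₁ + z₂) / 2 : ℕ)) + ell ρ ((((z₁ + z₂) / 2 : ℕ) : ℝ) + 1) := by
  obtain ⟨k, hk⟩ := hodd
  rw [show (z₁ + z₂) / 2 = k by omega]
  rcases le_abs'.1 hgap with h | h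
  · exact ell_add_ell_lt_of_lt hρ.2.ne (by omega) (by omega)
  · rw [add_comm (ell ρ z₁)]
    exact ell_add_ell_lt_of_lt hρ.2.ne (by omega) (by omega)

theorem ell_odd_split (ρ : ℝ) (hρ : ρ ∈ Set.Ioo (1/2 : ℝ) 1)
    (z₁ z₂ : ℕ) (hz₁ : 1 ≤ z₁) (hz₂ : 1 ≤ z₂)
    (hodd : Odd (z₁ + z₂)) (hgap : 2 ≤ |(z₁ : ℤ) - (z₂ : ℤ)|) :
    ell ρ z₁ + ell ρ z₂ >
      ell ρ (((z₁ + z₂) / 2 : ℕ)) + ell ρ ((((z₁ + z₂) / 2 : ℕ) : ℝ) + 1) :=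
  ell_odd_split_general ρ hρ z₁ z₂ hodd hgap
end

section
/- Let ρ ∈ (1/2, 1) and let z₁ ≥ 2 be an even natural number. Then ℓ_ρ(z₁) > 2 · ℓ_ρ(z₁/2). -/
/-! With `a = 1 - ρ`, squaring gives `ℓ(2x)² - (2ℓ(x))² = 2a(2x - 3a)`, which is positive as soon as
`0 < a` and `3a < 2x`; for `x = z₁/2 ≥ 1` this follows from `a < 1/2`. -/

lemma ell_nonneg (ρ x : ℝ) : 0 ≤ ell ρ x := Real.sqrt_nonneg _

lemma ell_sq (ρ x : ℝ) : ell ρ x ^ 2 = (1 - ρ)^2 + (x - (1 - ρ))^2 :=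
  Real.sq_sqrt (by positivity)

lemma ell_two_mul_sq_sub_sq (ρ x : ℝ) :
    ell ρ (2 * x) ^ 2 - (2 * ell ρ x) ^ 2 = 2 * (1 - ρ) * (2 * x - 3 * (1 - ρ)) := by
  rw [mul_pow, ell_sq, ell_sq]
  ring

lemma two_mul_ell_lt_ell_two_mul {ρ x : ℝ} (hρ : ρ < 1) (hx : 3 * (1 - ρ) < 2 * x) :
    2 * ell ρ x < ell ρ (2 * x) := by
  refine lt_of_pow_lt_pow_left₀ 2 (ell_nonneg ρ _) (sub_pos.mp ?_)
  rw [ell_two_mul_sq_sub_sq]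
  exact mul_pos (by linarith) (by linarith)

theorem ell_even_halve (ρ : ℝ) (hρ : ρ ∈ Set.Ioo (1/2 : ℝ) 1)
    (z₁ : ℕ) (hz₁ : 2 ≤ z₁) (heven : Even z₁) :
    ell ρ z₁ > 2 * ell ρ ((z₁ / 2 : ℕ)) := by
  obtain ⟨m, rfl⟩ := heven
  have hm : (1 : ℝ) ≤ m := by exact_mod_cast (by omega : 1 ≤ m)
  rw [show (m + m) / 2 = m by omega, Nat.cast_add, ← two_mul]
  exact two_mul_ell_lt_ell_two_mul hρ.2 (by linarith [hρ.1])
end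

section
/- Let ρ ∈ (1/2, 1) and let z₁ ≥ 3 be an odd natural number. Then ℓ_ρ(z₁) > ℓ_ρ(⌊z₁/2⌋) + ℓ_ρ(⌊z₁/2⌋ + 1). -/
theorem Real.sqrt_sq_add_sq_le_add_sq {a t : ℝ} (ht : 1 / 2 ≤ t) : √(a ^ 2 + t ^ 2) ≤ t + a ^ 2 :=
  Real.sqrt_le_iff.mpr ⟨by positivity, by nlinarith [sq_nonneg a]⟩

theorem Real.lt_sqrt_sq_add_sq {a t : ℝ} (ha : a ≠ 0) : t < √(a ^ 2 + t ^ 2) :=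
  calc t ≤ |t| := le_abs_self t
    _ = √(t ^ 2) := (Real.sqrt_sq_eq_abs t).symm
    _ < √(a ^ 2 + t ^ 2) := Real.sqrt_lt_sqrt (sq_nonneg t) (by simp [sq_pos_of_ne_zero ha])

theorem ell_le {ρ x : ℝ} (hx : 1 / 2 + (1 - ρ) ≤ x) : ell ρ x ≤ x - (1 - ρ) + (1 - ρ) ^ 2 :=
  Real.sqrt_sq_add_sq_le_add_sq (by linarith)

theorem sub_lt_ell {ρ : ℝ} (hρ : ρ ≠ 1) (x : ℝ) : x - (1 - ρ) < ell ρ x :=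
  Real.lt_sqrt_sq_add_sq (sub_ne_zero.mpr hρ.symm)

theorem ell_odd_halve (ρ : ℝ) (hρ : ρ ∈ Set.Ioo (1/2 : ℝ) 1)
    (z₁ : ℕ) (hz₁ : 3 ≤ z₁) (hodd : Odd z₁) :
    ell ρ z₁ > ell ρ ((z₁ / 2 : ℕ)) + ell ρ (((z₁ / 2 : ℕ) : ℝ) + 1) := by
  obtain ⟨hρ₁, hρ₂⟩ := hρ
  set k := z₁ / 2
  have hz : (z₁ : ℝ) = 2 * k + 1 := by
    have := Nat.odd_iff.mp hodd
    exact_mod_cast (show z₁ = 2 * k + 1 by omega)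
  have hk : (1 : ℝ) ≤ k := by exact_mod_cast (show 1 ≤ k by omega)
  have hk₀ := ell_le (ρ := ρ) (x := k) (by linarith)
  have hk₁ := ell_le (ρ := ρ) (x := k + 1) (by linarith)
  have hz₀ := sub_lt_ell hρ₂.ne (z₁ : ℝ)
  -- the two quadratic errors cost 2(1-ρ)², which is less than the slack 1-ρ since 1-ρ < 1/2
  nlinarith
end

section
/- Let ρ ∈ (1/2, 1). Let (z₁,...,z_k) be positive natural numbers and suppose some zⱼ ≥ 2. Then there exists a (k+1)-tuple (ẑ₁,...,ẑ_{k+1}) of positive natural numbers with the same total sum such that Σᵢ₌₁ᵏ ℓ_ρ(zᵢ) > Σᵢ₌₁ᵏ⁺¹ ℓ_ρ(ẑᵢ). -/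
open Finset Function

theorem Real.sqrt_add_sqrt_lt_sqrt {x y z : ℝ} (hx : 0 ≤ x) (hy : 0 ≤ y) (hxyz : x + y ≤ z)
    (h : 4 * (x * y) < (z - x - y) ^ 2) : √x + √y < √z := by
  have hgap : 0 < z - x - y := by
    rcases (sub_nonneg.mpr hxyz).eq_or_lt with h0 | h0
    · nlinarith [mul_nonneg hx hy]
    · linarith
  have hprod : 2 * (√x * √y) < z - x - y := by
    rw [← Real.sqrt_mul hx, ← Real.sqrt_sq zero_le_two, ← Real.sqrt_mul (sq_nonneg 2),
      Real.sqrt_lt' hgap]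
    linarith
  rw [Real.lt_sqrt (by positivity), add_sq, Real.sq_sqrt hx, Real.sq_sqrt hy]
  linarith

theorem ell_add_ell_one_lt {ρ t : ℝ} (hρ : ρ ∈ Set.Ico (1/2 : ℝ) 1) (ht : 1 ≤ t) :
    ell ρ t + ell ρ 1 < ell ρ (t + 1) := by
  obtain ⟨hρ₁, hρ₂⟩ := hρ
  set a := 1 - ρ
  have ha : 0 < a := by linarith
  have ha' : 0 ≤ 1 - 2 * a := by linarith
  apply Real.sqrt_add_sqrt_lt_sqrt (by positivity) (by positivity)
  · nlinarith
  · nlinarith [mul_nonneg (mul_nonneg ha.le ha') (sub_nonneg.mpr ht),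
      mul_nonneg (mul_nonneg ha.le ha.le) (sub_nonneg.mpr ht),
      mul_pos ha (show (0 : ℝ) < 1 - a by linarith)]

theorem Fintype.sum_update_add {ι M : Type*} [Fintype ι] [DecidableEq ι] [AddCommMonoid M]
    (g : ι → M) (j : ι) (b : M) : ∑ i, update g j b i + g j = b + ∑ i, g i := by
  rw [sum_update_of_mem (mem_univ j), sum_eq_sum_sdiff_singleton_add (mem_univ j) g, add_assoc]

theorem Fin.sum_cons_update_add {M : Type*} [AddCommMonoid M] {k : ℕ} (f : ℕ → M)
    (z : Fin k → ℕ) (j : Fin k) (m n : ℕ) :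
    ∑ i, f ((Fin.cons m (update z j n) : Fin (k + 1) → ℕ) i) + f (z j) = f m + f n + ∑ i, f (z i) := by
  simp only [Fin.sum_univ_succ, Fin.cons_zero, Fin.cons_succ, apply_update (fun _ => f)]
  rw [add_assoc, Fintype.sum_update_add, add_assoc]

theorem split_decreases_length (ρ : ℝ) (hρ : ρ ∈ Set.Ioo (1/2 : ℝ) 1)
    (k : ℕ) (z : Fin k → ℕ) (hz : ∀ i, 1 ≤ z i) (j : Fin k) (hj : 2 ≤ z j) :
    ∃ zhat : Fin (k + 1) → ℕ, (∀ i, 1 ≤ zhat i) ∧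
      (∑ i, zhat i) = (∑ i, z i) ∧
      (∑ i, ell ρ (z i)) > ∑ i, ell ρ (zhat i) := by
  refine ⟨Fin.cons 1 (update z j (z j - 1)), ?_, ?_, ?_⟩
  · simp only [Fin.forall_fin_succ, Fin.cons_zero, Fin.cons_succ, le_refl, true_and]
    exact (forall_update_iff z fun _ n => 1 ≤ n).mpr ⟨by omega, fun i _ => hz i⟩
  · have := Fin.sum_cons_update_add id z j 1 (z j - 1)
    simp only [id] at this
    omega
  · have hsplit := Fin.sum_cons_update_add (fun n : ℕ => ell ρ n) z j 1 (z j - 1)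
    have hlt := ell_add_ell_one_lt (Set.Ioo_subset_Ico_self hρ)
      (show (1 : ℝ) ≤ ((z j - 1 : ℕ) : ℝ) by exact_mod_cast (by omega : 1 ≤ z j - 1))
    rw [← Nat.cast_add_one, Nat.sub_add_cancel (by omega : 1 ≤ z j)] at hlt
    simp only [Nat.cast_one] at hsplit
    linarith
end

section
/- Let ρ ∈ (1/2, 1) and let M ≥ N ≥ 1 be natural numbers. The minimum of L[(mᵢ),(nᵢ)] = Σᵢ₌₁ᵏ (ℓ_ρ(mᵢ) + ℓ_ρ(nᵢ)) over all k with 1 ≤ k ≤ N and positive natural tuples (mᵢ)ᵢ₌₁ᵏ, (nᵢ)ᵢ₌₁ᵏ with Σmᵢ = M, Σnᵢ = N, equals 𝓛_ρ(M,N) = N·ℓ_ρ(1) + (M - ⌊M/N⌋·N)·ℓ_ρ(⌊M/N⌋ + 1) + (N - M + ⌊M/N⌋·N)·ℓ_ρ(⌊M/N⌋). -/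
noncomputable def Lcal (ρ : ℝ) (M N : ℕ) : ℝ :=
  (N : ℝ) * ell ρ 1 + ((M - M / N * N : ℕ) : ℝ) * ell ρ (((M / N : ℕ) : ℝ) + 1)
    + ((N - (M - M / N * N) : ℕ) : ℝ) * ell ρ ((M / N : ℕ))

/-!
`ℓ_ρ(x)` is the distance in `ℂ` from `x` to `(1 - ρ) - (1 - ρ) i`, hence a convex function of `x`,
so at every integer it lies above the chord through any two consecutive integers. Bounding
`ℓ_ρ(mᵢ)` by the chord through `q = ⌊M/N⌋, q + 1` and `ℓ_ρ(nᵢ)` by the chord through `1, 2`, a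
configuration with `k` parts has length at least `s M + (ℓ_ρ(2) - ℓ_ρ(1)) N + k (B_q + B_1)`, where
`s` is the slope and `B_a` the value at `0` of the chord through `a, a + 1`. Convexity gives
`B_q ≤ B_1`, and `ρ ≥ 1/3` gives `B_1 = 2 ℓ_ρ(1) - ℓ_ρ(2) ≤ 0`, so the bound is smallest at
`k = N`, where it equals `𝓛_ρ(M, N)`; it is attained by `nᵢ = 1` and `mᵢ ∈ {q, q + 1}`.
-/

open Set Finset

namespace ConvexOn

variable {f : ℝ → ℝ} {a b a' b' x : ℝ}

theorem add_slope_mul_le_of_notMem_Ioo (hf : ConvexOn ℝ univ f) (hab : a < b)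
    (hx : x ∉ Set.Ioo a b) : f a + slope f a b * (x - a) ≤ f x := by
  rcases lt_trichotomy x a with hxa | rfl | hax
  · have := hf.slope_mono (mem_univ a) ⟨mem_univ x, hxa.ne⟩ ⟨mem_univ b, hab.ne'⟩ (hxa.trans hab).le
    simp only [slope_def_field] at this ⊢
    rw [div_le_iff_of_neg (sub_neg.2 hxa)] at this
    linarith
  · simp
  · have hbx : b ≤ x := not_lt.1 fun hxb => hx ⟨hax, hxb⟩
    have := hf.slope_mono (mem_univ a) ⟨mem_univ b, hab.ne'⟩ ⟨mem_univ x, hax.ne'⟩ hbx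
    simp only [slope_def_field] at this ⊢
    rw [le_div_iff₀ (sub_pos.2 hax)] at this
    linarith

theorem slope_le_slope (hf : ConvexOn ℝ univ f) (ha : a < a') (hb : b < b') (hab : a ≤ b)
    (hab' : a' ≤ b') : slope f a a' ≤ slope f b b' :=
  calc slope f a a' ≤ slope f a b' :=
        hf.slope_mono (mem_univ a) ⟨mem_univ a', ha.ne'⟩ ⟨mem_univ b', (ha.trans_le hab').ne'⟩ hab'
    _ = slope f b' a := slope_comm f a b'
    _ ≤ slope f b' b :=
        hf.slope_mono (mem_univ b') ⟨mem_univ a, (hab.trans_lt hb).ne⟩ ⟨mem_univ b, hb.ne⟩ hab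
    _ = slope f b b' := slope_comm f b' b

theorem sub_slope_mul_le_sub_slope_mul (hf : ConvexOn ℝ univ f) (ha : a < a') (hb : b < b')
    (h₀ : 0 ≤ a) (hab : a ≤ b) (hab' : a' ≤ b') :
    f b - slope f b b' * b ≤ f a - slope f a a' * a := by
  have hchord := hf.add_slope_mul_le_of_notMem_Ioo hb (x := a) fun h => (h.1.trans_le' hab).false
  have hslope := hf.slope_le_slope ha hb hab hab'
  nlinarith

theorem card_mul_add_slope_mul_sum_le_sum {ι : Type*} (hf : ConvexOn ℝ univ f) (hab : a < b)
    (s : Finset ι) {y : ι → ℝ} (hy : ∀ i ∈ s, y i ∉ Set.Ioo a b) :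
    #s * (f a - slope f a b * a) + slope f a b * ∑ i ∈ s, y i ≤ ∑ i ∈ s, f (y i) :=
  calc #s * (f a - slope f a b * a) + slope f a b * ∑ i ∈ s, y i
      = ∑ i ∈ s, (f a + slope f a b * (y i - a)) := by
        simp only [sum_add_distrib, mul_sub, sum_sub_distrib, sum_const, nsmul_eq_mul, mul_sum]
        ring
    _ ≤ ∑ i ∈ s, f (y i) := sum_le_sum fun i hi => hf.add_slope_mul_le_of_notMem_Ioo hab (hy i hi)

end ConvexOn

theorem Nat.cast_notMem_Ioo_add_one (n q : ℕ) : (n : ℝ) ∉ Set.Ioo (q : ℝ) (q + 1) := by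
  rintro ⟨h₁, h₂⟩
  norm_cast at h₁ h₂
  omega

theorem slope_add_one (f : ℝ → ℝ) (a : ℝ) : slope f a (a + 1) = f (a + 1) - f a := by
  simp [slope_def_field]

theorem Fin.sum_ite_val_lt {M : Type*} [AddCommMonoid M] {N r : ℕ} (hr : r ≤ N) (a b : M) :
    ∑ i : Fin N, (if (i : ℕ) < r then a else b) = r • a + (N - r) • b := by
  have hcard := card_filter_add_card_filter_not (s := univ) fun i : Fin N => (i : ℕ) < r
  rw [Fin.card_filter_val_lt, min_eq_right hr, card_univ, Fintype.card_fin] at hcard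
  rw [sum_ite, Finset.sum_const, Finset.sum_const, Fin.card_filter_val_lt, min_eq_right hr]
  congr 2
  omega

theorem ell_eq_dist (ρ x : ℝ) : ell ρ x = dist (x : ℂ) ⟨1 - ρ, ρ - 1⟩ := by
  rw [ell, Complex.dist_eq_re_im]
  congr 1
  simp only [Complex.ofReal_re, Complex.ofReal_im]
  ring

theorem convexOn_ell (ρ : ℝ) : ConvexOn ℝ univ (ell ρ) := by
  simp only [funext (ell_eq_dist ρ)]
  exact (convexOn_dist _ convex_univ).comp_linearMap Complex.ofRealCLM.toLinearMap

theorem two_mul_ell_one_le_ell_two {ρ : ℝ} (hρ : ρ ∈ Set.Icc (1/3 : ℝ) 1) :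
    2 * ell ρ 1 ≤ ell ρ 2 := by
  obtain ⟨h₁, h₂⟩ := hρ
  rw [ell, ell, Real.le_sqrt (by positivity) (by positivity), mul_pow, Real.sq_sqrt (by positivity)]
  nlinarith

theorem Lcal_eq (ρ : ℝ) {M N : ℕ} (hN : 0 < N) :
    Lcal ρ M N = N * ell ρ 1 + (M % N : ℕ) * ell ρ ((M / N : ℕ) + 1)
      + (N - (M % N : ℕ) : ℝ) * ell ρ (M / N : ℕ) := by
  rw [Lcal, ← Nat.mod_eq_sub_div_mul, Nat.cast_sub (Nat.mod_lt M hN).le]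

theorem exists_sum_eq_Lcal (ρ : ℝ) {M N : ℕ} (hN : 0 < N) (hMN : N ≤ M) :
    ∃ m n : Fin N → ℕ, (∀ i, 1 ≤ m i) ∧ (∀ i, 1 ≤ n i) ∧ (∑ i, m i) = M ∧ (∑ i, n i) = N ∧
      Lcal ρ M N = ∑ i, (ell ρ (m i) + ell ρ (n i)) := by
  have hq : 1 ≤ M / N := (Nat.one_le_div_iff hN).2 hMN
  have hr : M % N ≤ N := (Nat.mod_lt M hN).le
  refine ⟨fun i => if (i : ℕ) < M % N then M / N + 1 else M / N, fun _ => 1,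
    fun i => by dsimp only; split_ifs <;> omega, fun _ => le_rfl, ?_, by simp, ?_⟩
  · rw [Fin.sum_ite_val_lt hr, smul_eq_mul, smul_eq_mul]
    zify [hr]
    linear_combination (by exact_mod_cast Nat.div_add_mod M N : (N * (M / N) + M % N : ℤ) = M)
  · simp only [sum_add_distrib, Nat.cast_ite, apply_ite (ell ρ), Fin.sum_ite_val_lt hr,
      Finset.sum_const, card_univ, Fintype.card_fin, nsmul_eq_mul, Nat.cast_sub hr, Nat.cast_one,
      Nat.cast_add, Lcal_eq ρ hN]
    ring

theorem Lcal_le_sum {ρ : ℝ} (hρ : ρ ∈ Set.Icc (1/3 : ℝ) 1) {M N k : ℕ} (hN : 0 < N) (hMN : N ≤ M)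
    (hk : k ≤ N) (m n : Fin k → ℕ) (hm : ∑ i, m i = M) (hn : ∑ i, n i = N) :
    Lcal ρ M N ≤ ∑ i, (ell ρ (m i) + ell ρ (n i)) := by
  set q : ℕ := M / N
  set s := ell ρ (q + 1) - ell ρ q
  set B := ell ρ q - s * q
  have hq : (1 : ℝ) ≤ q := by exact_mod_cast (Nat.one_le_div_iff hN).2 hMN
  have hsum_m : k * B + s * M ≤ ∑ i, ell ρ (m i) := by
    have := (convexOn_ell ρ).card_mul_add_slope_mul_sum_le_sum (lt_add_one (q : ℝ)) univ
      fun i _ => Nat.cast_notMem_Ioo_add_one (m i) q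
    rwa [card_univ, Fintype.card_fin, ← Nat.cast_sum, hm, slope_add_one] at this
  have hsum_n : k * (2 * ell ρ 1 - ell ρ 2) + (ell ρ 2 - ell ρ 1) * N ≤ ∑ i, ell ρ (n i) := by
    have := (convexOn_ell ρ).card_mul_add_slope_mul_sum_le_sum (lt_add_one ((1 : ℕ) : ℝ))
      univ fun i _ => Nat.cast_notMem_Ioo_add_one (n i) 1
    rw [card_univ, Fintype.card_fin, ← Nat.cast_sum, hn, slope_add_one, Nat.cast_one,
      one_add_one_eq_two] at this
    linarith
  have hB : B ≤ 2 * ell ρ 1 - ell ρ 2 := by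
    have := (convexOn_ell ρ).sub_slope_mul_le_sub_slope_mul (lt_add_one 1) (lt_add_one (q : ℝ))
      zero_le_one hq (by linarith)
    rw [slope_add_one, slope_add_one, one_add_one_eq_two] at this
    linarith
  have hLcal : Lcal ρ M N = s * M + N * B + N * ell ρ 1 := by
    have hM : (M : ℝ) = N * q + (M % N : ℕ) := by exact_mod_cast (Nat.div_add_mod M N).symm
    rw [Lcal_eq ρ hN, hM]
    ring
  have h21 := two_mul_ell_one_le_ell_two hρ
  have hkN : (k : ℝ) ≤ N := by exact_mod_cast hk
  rw [sum_add_distrib, hLcal]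
  nlinarith [mul_nonneg (sub_nonneg.2 hkN) (by linarith : 0 ≤ -(B + 2 * ell ρ 1 - ell ρ 2))]

theorem geodesic_length (ρ : ℝ) (hρ : ρ ∈ Set.Ioo (1/2 : ℝ) 1)
    (M N : ℕ) (hN : 1 ≤ N) (hMN : N ≤ M) :
    IsLeast
      { L : ℝ | ∃ k : ℕ, 1 ≤ k ∧ k ≤ N ∧
          ∃ m n : Fin k → ℕ, (∀ i, 1 ≤ m i) ∧ (∀ i, 1 ≤ n i) ∧
            (∑ i, m i) = M ∧ (∑ i, n i) = N ∧
            L = ∑ i, (ell ρ (m i) + ell ρ (n i)) }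
      (Lcal ρ M N) := by
  refine ⟨?_, ?_⟩
  · obtain ⟨m, n, hm_pos, hn_pos, hm, hn, hL⟩ := exists_sum_eq_Lcal ρ hN hMN
    exact ⟨N, hN, le_rfl, m, n, hm_pos, hn_pos, hm, hn, hL⟩
  · rintro _ ⟨k, -, hk, m, n, -, -, hm, hn, rfl⟩
    have hρ' : ρ ∈ Set.Icc (1/3 : ℝ) 1 := ⟨by linarith [hρ.1], hρ.2.le⟩
    exact Lcal_le_sum hρ' hN hMN hk m n hm hn
end

section
/- Let ρ ∈ (1/2, 1) and M ≥ N ≥ 1 naturals. Then 𝓛_ρ(M,N) < M + N, i.e. the optimal geodesic is strictly shorter than the Manhattan path, and 𝓛_ρ(M,N) ≥ sqrt(M² + N²). -/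
lemma ell_eq_norm (ρ x : ℝ) : ell ρ x = ‖(⟨1 - ρ, x - (1 - ρ)⟩ : ℂ)‖ := by
  rw [ell, Complex.norm_eq_sqrt_sq_add_sq]

lemma ell_le_self {ρ x : ℝ} (hρ : ρ ≤ 1) (hx : 1 - ρ ≤ x) : ell ρ x ≤ x := by
  rw [ell, Real.sqrt_le_left (by linarith)]
  nlinarith

lemma ell_lt_self {ρ x : ℝ} (hρ : ρ < 1) (hx : 1 - ρ < x) : ell ρ x < x := by
  rw [ell, Real.sqrt_lt' (by linarith)]
  nlinarith

lemma Lcal_eq_of_pos (ρ : ℝ) (M : ℕ) {N : ℕ} (hN : 0 < N) :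
    Lcal ρ M N = N * ell ρ 1 + (M % N : ℕ) * ell ρ ((M / N : ℕ) + 1)
      + (N - (M % N : ℕ) : ℝ) * ell ρ (M / N : ℕ) := by
  have hr : M - M / N * N = M % N := by rw [Nat.mod_def, Nat.mul_comm]
  rw [Lcal, hr, Nat.cast_sub (Nat.mod_lt M hN).le]

lemma cast_eq_div_mul_add_mod (M N : ℕ) : (M : ℝ) = (M / N : ℕ) * N + (M % N : ℕ) := by
  exact_mod_cast (Nat.div_add_mod' M N).symm

lemma sq_add_sq_le_sq_add_sq_of_le {a b t : ℝ} (ht : t ≤ b) (hb : b ≤ a) :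
    a ^ 2 + b ^ 2 ≤ t ^ 2 + (a + b - t) ^ 2 := by
  nlinarith [mul_nonneg (sub_nonneg.2 ht) (sub_nonneg.2 (ht.trans hb))]

section WeightedSum

variable {ρ N q r : ℝ}

lemma weighted_ell_lt (hρ : ρ ∈ Set.Ioo 0 1) (hN : 0 < N) (hr0 : 0 ≤ r) (hrN : r ≤ N)
    (hq : 1 ≤ q) : N * ell ρ 1 + r * ell ρ (q + 1) + (N - r) * ell ρ q < q * N + r + N := by
  obtain ⟨hρ0, hρ1⟩ := hρ
  have h1 : N * ell ρ 1 < N * 1 :=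
    mul_lt_mul_of_pos_left (ell_lt_self hρ1 (by linarith)) hN
  have h2 : r * ell ρ (q + 1) ≤ r * (q + 1) :=
    mul_le_mul_of_nonneg_left (ell_le_self hρ1.le (by linarith)) hr0
  have h3 : (N - r) * ell ρ q ≤ (N - r) * q :=
    mul_le_mul_of_nonneg_left (ell_le_self hρ1.le (by linarith)) (by linarith)
  linarith

lemma sqrt_le_weighted_ell (hρ : 1 / 2 ≤ ρ) (hr0 : 0 ≤ r) (hrN : r ≤ N) (hNM : N ≤ q * N + r) :
    Real.sqrt ((q * N + r) ^ 2 + N ^ 2) ≤ N * ell ρ 1 + r * ell ρ (q + 1) + (N - r) * ell ρ q := by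
  let z : ℝ → ℂ := fun x ↦ ⟨1 - ρ, x - (1 - ρ)⟩
  have hsum : (N : ℂ) * z 1 + (r : ℂ) * z (q + 1) + ((N - r : ℝ) : ℂ) * z q
      = ⟨2 * N * (1 - ρ), q * N + r + N - 2 * N * (1 - ρ)⟩ := by
    apply Complex.ext <;>
      simp only [z, Complex.add_re, Complex.add_im, Complex.mul_re, Complex.mul_im, Complex.ofReal_re,
        Complex.ofReal_im, zero_mul, sub_zero, add_zero] <;> ring
  calc Real.sqrt ((q * N + r) ^ 2 + N ^ 2)
      ≤ ‖(⟨2 * N * (1 - ρ), q * N + r + N - 2 * N * (1 - ρ)⟩ : ℂ)‖ := by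
        rw [Complex.norm_eq_sqrt_sq_add_sq]
        exact Real.sqrt_le_sqrt (sq_add_sq_le_sq_add_sq_of_le (by nlinarith) hNM)
    _ ≤ ‖(N : ℂ) * z 1‖ + ‖(r : ℂ) * z (q + 1)‖ + ‖((N - r : ℝ) : ℂ) * z q‖ :=
        hsum ▸ norm_add₃_le
    _ = N * ell ρ 1 + r * ell ρ (q + 1) + (N - r) * ell ρ q := by
        simp only [norm_mul, Complex.norm_real, Real.norm_eq_abs, abs_of_nonneg hr0,
          abs_of_nonneg (hr0.trans hrN), abs_of_nonneg (sub_nonneg.2 hrN), z, ← ell_eq_norm]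

end WeightedSum

theorem Lcal_lt_add {ρ : ℝ} (hρ : ρ ∈ Set.Ioo 0 1) {M N : ℕ} (hN : 0 < N) (hMN : N ≤ M) :
    Lcal ρ M N < M + N := by
  rw [Lcal_eq_of_pos ρ M hN, cast_eq_div_mul_add_mod M N]
  exact weighted_ell_lt hρ (by exact_mod_cast hN) (Nat.cast_nonneg _)
    (by exact_mod_cast (Nat.mod_lt M hN).le) (by exact_mod_cast (Nat.one_le_div_iff hN).2 hMN)

theorem sqrt_sq_add_sq_le_Lcal {ρ : ℝ} (hρ : 1 / 2 ≤ ρ) {M N : ℕ} (hN : 0 < N) (hMN : N ≤ M) :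
    Real.sqrt ((M : ℝ) ^ 2 + (N : ℝ) ^ 2) ≤ Lcal ρ M N := by
  rw [Lcal_eq_of_pos ρ M hN, cast_eq_div_mul_add_mod M N]
  refine sqrt_le_weighted_ell hρ (Nat.cast_nonneg _) (by exact_mod_cast (Nat.mod_lt M hN).le) ?_
  rw [← cast_eq_div_mul_add_mod]
  exact_mod_cast hMN

theorem Lcal_bounds (ρ : ℝ) (hρ : ρ ∈ Set.Ioo (1/2 : ℝ) 1)
    (M N : ℕ) (hN : 1 ≤ N) (hMN : N ≤ M) :
    Lcal ρ M N < (M : ℝ) + (N : ℝ) ∧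
      Real.sqrt ((M : ℝ)^2 + (N : ℝ)^2) ≤ Lcal ρ M N :=
  ⟨Lcal_lt_add ⟨by linarith [hρ.1], hρ.2⟩ hN hMN, sqrt_sq_add_sq_le_Lcal hρ.1.le hN hMN⟩
end
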